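/- Let P, Q be Laurent polynomials in one variable, p a prime, and let Λ_p^k(Q) := Λ_p(P^k Q) for 0 ≤ k ≤ p−1. If m := max(deg(P) − 1, deg(Q)), then for every finite sequence k_0, …, k_t of digits in {0, …, p−1}, deg(Λ_p^{k_t}(⋯Λ_p^{k_0}(Q)⋯)) ≤ m. In particular, deg(Λ_p^k(Q)) ≤ (p−1)/p · deg(P) + deg(Q)/p for every k ≤ p−1. -/

import Mathlib

open scoped Classical

/-- `Λ_p`: delete terms whose exponent is not divisible by `p` and substitute `x^p ↦ x`. -/
noncomputable def lam {R : Type*} [Semiring R] (p : ℕ) (hp : p ≠ 0) (Q : LaurentPolynomial R) :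
    LaurentPolynomial R :=
  AddMonoidAlgebra.ofCoeff (Finsupp.comapDomain (fun i : ℤ => (p : ℤ) * i) (AddMonoidAlgebra.coeff Q)
    ((mul_right_injective₀ (Int.natCast_ne_zero.mpr hp)).injOn))

/-- `substPow p Q = Q(x^p)`. -/
noncomputable def substPow {R : Type*} [Semiring R] (p : ℕ) (Q : LaurentPolynomial R) :
    LaurentPolynomial R :=
  AddMonoidAlgebra.ofCoeff (Finsupp.mapDomain (fun i : ℤ => (p : ℤ) * i) (AddMonoidAlgebra.coeff Q))

/-- The largest absolute value of an exponent with nonzero coefficient (`0` for `Q = 0`). -/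
noncomputable def ldeg {R : Type*} [Semiring R] (Q : LaurentPolynomial R) : ℕ :=
  (AddMonoidAlgebra.coeff Q).support.sup fun i => i.natAbs

lemma ldeg_mul_le (P Q : LaurentPolynomial ℤ) : ldeg (P * Q) ≤ ldeg P + ldeg Q := by
  apply Finset.sup_le
  intro i hi
  obtain ⟨a, ha, b, hb, rfl⟩ := Finset.mem_add.mp (AddMonoidAlgebra.support_coeff_mul_subset P Q hi)
  exact (Int.natAbs_add_le a b).trans
    (add_le_add (Finset.le_sup ha) (Finset.le_sup hb))

lemma ldeg_pow_le (P : LaurentPolynomial ℤ) (k : ℕ) : ldeg (P ^ k) ≤ k * ldeg P := by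
  induction k with
  | zero =>
    simp only [pow_zero, Nat.zero_mul, Nat.le_zero, ldeg]
    apply Nat.le_antisymm _ (Nat.zero_le _)
    rw [show AddMonoidAlgebra.coeff (1 : LaurentPolynomial ℤ) = Finsupp.single 0 1 from rfl]
    apply Finset.sup_le
    intro i hi
    have := Finsupp.support_single_subset hi
    simp only [Finset.mem_singleton] at this
    simp [this]
  | succ n ih =>
    rw [pow_succ]
    calc ldeg (P ^ n * P) ≤ ldeg (P ^ n) + ldeg P := ldeg_mul_le _ _
    _ ≤ n * ldeg P + ldeg P := by omega
    _ = (n + 1) * ldeg P := by ring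

lemma ldeg_lam_le (p : ℕ) (hp : p ≠ 0) (Q : LaurentPolynomial ℤ) :
    ldeg (lam p hp Q) ≤ ldeg Q / p := by
  apply Finset.sup_le
  intro i hi
  rw [Nat.le_div_iff_mul_le (Nat.pos_of_ne_zero hp)]
  have hmem : ((p : ℤ) * i) ∈ (AddMonoidAlgebra.coeff Q).support := by
    have := hi
    rw [lam, AddMonoidAlgebra.coeff_ofCoeff, Finsupp.comapDomain_support, Finset.mem_preimage] at this
    exact this
  have h1 : ((p : ℤ) * i).natAbs ≤ ldeg Q := Finset.le_sup (f := fun i : ℤ => i.natAbs) hmem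
  calc i.natAbs * p = ((p : ℤ) * i).natAbs := by
        rw [Int.natAbs_mul]; simp [mul_comm]
    _ ≤ ldeg Q := h1

lemma key (p : ℕ) (hp : p ≠ 0) (P R : LaurentPolynomial ℤ) (k : ℕ) :
    ldeg (lam p hp (P ^ k * R)) ≤ (k * ldeg P + ldeg R) / p := by
  refine (ldeg_lam_le p hp _).trans (Nat.div_le_div_right ?_)
  exact (ldeg_mul_le _ _).trans (Nat.add_le_add_right (ldeg_pow_le P k) _)

/-- with `m = max(deg P − 1, deg Q)`, any iterated application of the maps
`Q ↦ Λ_p(P^k Q)` (digits `k < p`) to `Q` has degree at most `m`; moreover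
`deg(Λ_p(P^k Q')) ≤ (p−1)/p·deg P + deg Q'/p` for every `k ≤ p − 1`. -/
theorem stmt3 (p : ℕ) (hp : p.Prime) (P Q : LaurentPolynomial ℤ) :
    (∀ ks : List ℕ, (∀ k ∈ ks, k < p) →
      ldeg (ks.foldl (fun R k => lam p hp.ne_zero (P ^ k * R)) Q) ≤
        max (ldeg P - 1) (ldeg Q)) ∧
    (∀ Q' : LaurentPolynomial ℤ, ∀ k ≤ p - 1,
      (ldeg (lam p hp.ne_zero (P ^ k * Q')) : ℝ) ≤
        ((p : ℝ) - 1) / p * ldeg P + (ldeg Q' : ℝ) / p) := by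
  have hp0 : 0 < p := hp.pos
  set m := max (ldeg P - 1) (ldeg Q) with hm
  have step : ∀ (R : LaurentPolynomial ℤ) (k : ℕ), k < p → ldeg R ≤ m →
      ldeg (lam p hp.ne_zero (P ^ k * R)) ≤ m := by
    intro R k hk hR
    refine (key p hp.ne_zero P R k).trans ?_
    rw [Nat.div_le_iff_le_mul_add_pred hp0]
    have hP : ldeg P ≤ m + 1 := by omega
    obtain ⟨q, rfl⟩ : ∃ q, p = q + 1 := ⟨p - 1, by omega⟩
    have h1 : k * ldeg P ≤ q * (m + 1) := Nat.mul_le_mul (by omega) hP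
    have h2 : q * (m + 1) = q * m + q := by ring
    have h3 : (q + 1) * m = q * m + m := by ring
    omega
  constructor
  · intro ks hks
    have : ∀ R : LaurentPolynomial ℤ, ldeg R ≤ m →
        ldeg (ks.foldl (fun R k => lam p hp.ne_zero (P ^ k * R)) R) ≤ m := by
      induction ks with
      | nil => intro R hR; simpa using hR
      | cons a l ih =>
        intro R hR
        simp only [List.foldl_cons]
        exact ih (fun k hk => hks k (List.mem_cons_of_mem a hk)) _
          (step R a (hks a List.mem_cons_self) hR)
    exact this Q (le_max_right _ _)
  · intro Q' k hk
    have h1 := key p hp.ne_zero P Q' k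
    have h2 : ((ldeg (lam p hp.ne_zero (P ^ k * Q'))) : ℝ) ≤
        ((k * ldeg P + ldeg Q' : ℕ) : ℝ) / p := by
      calc ((ldeg (lam p hp.ne_zero (P ^ k * Q'))) : ℝ)
          ≤ (((k * ldeg P + ldeg Q') / p : ℕ) : ℝ) := by exact_mod_cast h1
        _ ≤ ((k * ldeg P + ldeg Q' : ℕ) : ℝ) / p := Nat.cast_div_le
    refine h2.trans ?_
    have hppos : (0 : ℝ) < p := by exact_mod_cast hp0
    have hk' : (k : ℝ) ≤ (p : ℝ) - 1 := by
      have : (k : ℝ) ≤ ((p - 1 : ℕ) : ℝ) := by exact_mod_cast hk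
      rw [Nat.cast_sub hp.one_le] at this
      simpa using this
    have hPn : (0 : ℝ) ≤ (ldeg P : ℝ) := Nat.cast_nonneg _
    have hnum : ((k * ldeg P + ldeg Q' : ℕ) : ℝ) ≤ ((p : ℝ) - 1) * ldeg P + ldeg Q' := by
      push_cast
      nlinarith
    calc ((k * ldeg P + ldeg Q' : ℕ) : ℝ) / p
        ≤ (((p : ℝ) - 1) * ldeg P + ldeg Q') / p := by gcongr
      _ = ((p : ℝ) - 1) / p * ldeg P + (ldeg Q' : ℝ) / p := by ring
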